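/- Let T be a string, let i, j be positions in T, and let δ ≥ 1 satisfy i + δ ≤ |T| and j + δ ≤ |T|. Then the prefixes T.take (i + δ) and T.take (j + δ) have a common suffix of length at least δ if and only if LCE(i, j) ≥ δ; and when this holds, LCE(i, j) = δ + LCE(i + δ, j + δ). (This is the correctness of the query algorithm for long LCEs, where the common-suffix length is the reverse extension LCE_R computed on reversed prefixes.) -/
import Mathlib


/-- The longest common extension of suffixes `i` and `j` of `T`: the largest `ℓ`
with `ℓ ≤ |T| - i`, `ℓ ≤ |T| - j` and `(T.drop i).take ℓ = (T.drop j).take ℓ`. -/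
def lce {α : Type*} [DecidableEq α] (T : List α) (i j : ℕ) : ℕ :=
  Nat.findGreatest
    (fun ℓ => ℓ ≤ T.length - i ∧ ℓ ≤ T.length - j ∧ (T.drop i).take ℓ = (T.drop j).take ℓ)
    T.length

lemma lce_spec {α : Type*} [DecidableEq α] (T : List α) (i j : ℕ) :
    lce T i j ≤ T.length - i ∧ lce T i j ≤ T.length - j ∧
      (T.drop i).take (lce T i j) = (T.drop j).take (lce T i j) :=
  Nat.findGreatest_spec (P := fun ℓ => ℓ ≤ T.length - i ∧ ℓ ≤ T.length - j ∧
    (T.drop i).take ℓ = (T.drop j).take ℓ) (Nat.zero_le _)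
    ⟨Nat.zero_le _, Nat.zero_le _, by simp⟩

lemma le_lce {α : Type*} [DecidableEq α] {T : List α} {i j m : ℕ}
    (h1 : m ≤ T.length - i) (h2 : m ≤ T.length - j)
    (h3 : (T.drop i).take m = (T.drop j).take m) : m ≤ lce T i j :=
  Nat.le_findGreatest (le_trans h1 (Nat.sub_le _ _)) ⟨h1, h2, h3⟩

/-- Correctness of the query algorithm for long LCEs: the prefixes `T.take (i + δ)` and
`T.take (j + δ)` share a suffix of length at least `δ` iff `LCE(i,j) ≥ δ`, in which case
`LCE(i,j) = δ + LCE(i + δ, j + δ)`. -/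
theorem stmt_13 {α : Type*} [DecidableEq α] (T : List α) (i j δ : ℕ) (hδ : 1 ≤ δ)
    (hi : i + δ ≤ T.length) (hj : j + δ ≤ T.length) :
    ((T.take (i + δ)).reverse.take δ = (T.take (j + δ)).reverse.take δ ↔ δ ≤ lce T i j) ∧
    ((T.take (i + δ)).reverse.take δ = (T.take (j + δ)).reverse.take δ →
      lce T i j = δ + lce T (i + δ) (j + δ)) := by
  have hleni : (T.take (i + δ)).length = i + δ := List.length_take_of_le hi
  have hlenj : (T.take (j + δ)).length = j + δ := List.length_take_of_le hj
  have hrev : ((T.take (i + δ)).reverse.take δ = (T.take (j + δ)).reverse.take δ) ↔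
      (T.drop i).take δ = (T.drop j).take δ := by
    rw [List.take_reverse, List.take_reverse, hleni, hlenj,
      Nat.add_sub_cancel, Nat.add_sub_cancel, List.reverse_inj,
      List.drop_take, List.drop_take]
    simp [Nat.add_sub_cancel_left]
  -- forward direction of iff
  have hfwd : (T.drop i).take δ = (T.drop j).take δ → δ ≤ lce T i j := fun h =>
    le_lce (Nat.le_sub_of_add_le (by omega)) (Nat.le_sub_of_add_le (by omega)) h
  have hbwd : δ ≤ lce T i j → (T.drop i).take δ = (T.drop j).take δ := by
    intro h
    obtain ⟨_, _, heq⟩ := lce_spec T i j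
    have := congrArg (List.take δ) heq
    simpa [List.take_take, Nat.min_eq_left h] using this
  refine ⟨hrev.trans ⟨hfwd, hbwd⟩, fun h => ?_⟩
  have hδeq : (T.drop i).take δ = (T.drop j).take δ := hrev.mp h
  obtain ⟨hL1, hL2, hLeq⟩ := lce_spec T (i + δ) (j + δ)
  set L := lce T (i + δ) (j + δ) with hLdef
  -- δ + L ≤ lce T i j
  have h1 : δ + L ≤ lce T i j := by
    apply le_lce (by omega) (by omega)
    rw [List.take_add, List.take_add, List.drop_drop, List.drop_drop, hδeq, hLeq]
  -- lce T i j ≤ δ + L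
  have h2 : lce T i j ≤ δ + L := by
    obtain ⟨hK1, hK2, hKeq⟩ := lce_spec T i j
    set K := lce T i j with hKdef
    rcases le_or_gt K δ with hKδ | hKδ
    · omega
    · have hm : K - δ ≤ L := by
        apply le_lce (by omega) (by omega)
        have := congrArg (List.drop δ) hKeq
        rwa [List.drop_take, List.drop_take, List.drop_drop, List.drop_drop] at this
      omega
  omega
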